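/- The linear map ψ from the complexified Diamond Lie algebra to sl(3,ℂ) defined by ψ(P+) = E_{12}, ψ(P-) = E_{23}, ψ(J) = (i/3)(H1 - H2) with H1 = E_{11} - E_{22}, H2 = E_{22} - E_{33}, and ψ(T) = -(i/2)E_{13}, is an injective Lie algebra homomorphism. -/

import Mathlib

open Matrix

/-- Bracket of the complexified Diamond Lie algebra in the basis `{J, P+, P-, T}`
(coordinates indexed `0,1,2,3`): `[J,P+]=iP+`, `[J,P-]=-iP-`, `[P+,P-]=2iT`. -/
def diamondBracket (u v : Fin 4 → ℂ) : Fin 4 → ℂ :=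
  ![0, Complex.I * (u 0 * v 1 - u 1 * v 0), -Complex.I * (u 0 * v 2 - u 2 * v 0),
    2 * Complex.I * (u 1 * v 2 - u 2 * v 1)]

/-- `H1 = E₁₁ - E₂₂`. -/
def H1 : Matrix (Fin 3) (Fin 3) ℂ := Matrix.single 0 0 1 - Matrix.single 1 1 1
/-- `H2 = E₂₂ - E₃₃`. -/
def H2 : Matrix (Fin 3) (Fin 3) ℂ := Matrix.single 1 1 1 - Matrix.single 2 2 1

/-- The map `ψ` with `ψ(J) = (i/3)(H1-H2)`, `ψ(P+) = E₁₂`, `ψ(P-) = E₂₃`,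
`ψ(T) = -(i/2)E₁₃`, extended linearly. -/
noncomputable def psiMap (u : Fin 4 → ℂ) : Matrix (Fin 3) (Fin 3) ℂ :=
  u 0 • ((Complex.I / 3) • (H1 - H2)) + u 1 • Matrix.single 0 1 1
    + u 2 • Matrix.single 1 2 1 + u 3 • (-(Complex.I / 2) • Matrix.single 0 2 1)

lemma psiMap_eq (u : Fin 4 → ℂ) : psiMap u =
    !![Complex.I/3 * u 0, u 1, -(Complex.I/2) * u 3;
       0, -(2*Complex.I/3) * u 0, u 2;
       0, 0, Complex.I/3 * u 0] := by
  ext i j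
  fin_cases i <;> fin_cases j <;>
    simp [psiMap, H1, H2, Matrix.single] <;> ring_nf <;> simp [vecHead, vecTail]

/-- `ψ` is an injective Lie algebra homomorphism of the complexified Diamond Lie algebra
into `sl(3,ℂ)` (traceless matrices with the commutator bracket). -/
theorem psi_injective_hom_into_sl3 :
    Function.Injective psiMap ∧
    (∀ u : Fin 4 → ℂ, (psiMap u).trace = 0) ∧
    (∀ u v : Fin 4 → ℂ,
      psiMap (diamondBracket u v) = psiMap u * psiMap v - psiMap v * psiMap u) := by
  refine ⟨?_, ?_, ?_⟩
  · intro u v h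
    rw [psiMap_eq, psiMap_eq] at h
    have h00 := congrFun (congrFun h 0) 0
    have h01 := congrFun (congrFun h 0) 1
    have h02 := congrFun (congrFun h 0) 2
    have h12 := congrFun (congrFun h 1) 2
    simp at h00 h01 h02 h12
    funext i
    fin_cases i <;> simp_all [Complex.ext_iff]
  · intro u
    rw [psiMap_eq]
    simp [Matrix.trace, Fin.sum_univ_three]
    ring
  · intro u v
    rw [psiMap_eq, psiMap_eq, psiMap_eq]
    ext i j
    fin_cases i <;> fin_cases j <;>
      simp [diamondBracket, mul_apply, Fin.sum_univ_three, vecHead, vecTail, Complex.I_sq] <;> ring_nf <;> simp [Complex.I_sq] <;> ring
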